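/- The map φ sending every binary forest with n leaves to X^n extends to a surjective morphism of Hopf algebras from the Hopf algebra H of binary forests to the binomial Hopf algebra k[X] with Δ(X) = X⊗1 + 1⊗X; in particular φ(Δ_H(F)) = Δ_{k[X]}(X^n) for every forest F with n leaves. -/

import Mathlib

/-- Full binary rooted trees. -/
inductive BTree : Type
  | leaf : BTree
  | node : BTree → BTree → BTree
  deriving DecidableEq

namespace BTree

def leafCount : BTree → ℕ
  | leaf => 1
  | node l r => leafCount l + leafCount r

def leafPos : BTree → List (List Bool)
  | leaf => [[]]
  | node l r => (leafPos l).map (List.cons false) ++ (leafPos r).map (List.cons true)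

/-- The pruned forest `F_A` of the cut given by the leaf subset `A`. -/
def maxSub (p : List Bool → Bool) : BTree → List Bool → List BTree
  | leaf, q => if p q then [leaf] else []
  | node l r, q =>
      if (leafPos (node l r)).all (fun s => p (q ++ s)) then [node l r]
      else maxSub p l (q ++ [false]) ++ maxSub p r (q ++ [true])

/-- The remainder `T/A`, contracted back to a full binary tree. -/
def quotA (p : List Bool → Bool) : BTree → List Bool → Option BTree
  | leaf, q => if p q then none else some leaf
  | node l r, q =>
      match quotA p l (q ++ [false]), quotA p r (q ++ [true]) with
      | some l', some r' => some (node l' r')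
      | some l', none => some l'
      | none, some r' => some r'
      | none, none => none

end BTree

noncomputable section
open scoped TensorProduct

/-- The Hopf algebra `H` of binary forests. -/
abbrev V : Type := AddMonoidAlgebra ℚ (Multiset BTree)

noncomputable def fδ (m : Multiset BTree) : V := AddMonoidAlgebra.single m 1

def optForest : Option BTree → Multiset BTree
  | none => 0
  | some t => {t}

/-- Coproduct of a tree: `Δ(T) = Σ_{A ⊆ L(T)} F_A ⊗ T/A`, indexed by subsets
of leaves (equivalently, binary-admissible cuts plus the total cut). -/
noncomputable def treeDelta (T : BTree) : V ⊗[ℚ] V :=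
  ∑ A ∈ (BTree.leafPos T).toFinset.powerset,
    fδ ↑(BTree.maxSub (fun q => decide (q ∈ A)) T []) ⊗ₜ[ℚ]
      fδ (optForest (BTree.quotA (fun q => decide (q ∈ A)) T []))

/-- Coproduct of a forest: multiplicative extension of `treeDelta`. -/
noncomputable def forestDelta (m : Multiset BTree) : V ⊗[ℚ] V :=
  (m.map treeDelta).prod

/-- The coproduct `Δ_H : H → H ⊗ H` as a linear map. -/
noncomputable def ΔH : V →ₗ[ℚ] V ⊗[ℚ] V :=
  Finsupp.lift (V ⊗[ℚ] V) ℚ (Multiset BTree) forestDelta ∘ₗ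
    (AddMonoidAlgebra.coeffLinearEquiv ℚ).toLinearMap

/-- Number of leaves of a forest. -/
def forestLeafCount (m : Multiset BTree) : ℕ := (m.map BTree.leafCount).sum

/-- The map sending a forest with `n` leaves to `X^n`, extended linearly. -/
noncomputable def φ : V →ₗ[ℚ] Polynomial ℚ :=
  Finsupp.lift (Polynomial ℚ) ℚ (Multiset BTree)
    (fun m => Polynomial.X ^ forestLeafCount m) ∘ₗ
    (AddMonoidAlgebra.coeffLinearEquiv ℚ).toLinearMap

/-- The binomial (Hopf-algebra) coproduct on `ℚ[X]`, determined by
`Δ(X) = X ⊗ 1 + 1 ⊗ X`. -/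
noncomputable def Δpoly : Polynomial ℚ →ₐ[ℚ] Polynomial ℚ ⊗[ℚ] Polynomial ℚ :=
  Polynomial.aeval
    ((Polynomial.X ⊗ₜ[ℚ] 1 + 1 ⊗ₜ[ℚ] Polynomial.X) :
      Polynomial ℚ ⊗[ℚ] Polynomial ℚ)

/-- The counit of `H` (1 on the empty forest, 0 on nonempty forests). -/
noncomputable def εH : V →ₗ[ℚ] ℚ :=
  Finsupp.lift ℚ ℚ (Multiset BTree) (fun m => if m = 0 then 1 else 0) ∘ₗ
    (AddMonoidAlgebra.coeffLinearEquiv ℚ).toLinearMap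

/-! The term of `Δ_H(T)` indexed by a leaf subset `A` is `F_A ⊗ T/A`, where `F_A` has `|A|` leaves
and `T/A` has the other `n - |A|`. Hence `φ ⊗ φ` sends `Δ_H(T)` to
`∑_A X^|A| ⊗ X^(n - |A|) = (X ⊗ 1 + 1 ⊗ X)^n = Δ(X^n)`, and multiplicativity of both sides extends
this to forests. Leaf counts add under disjoint union, so `φ` is an algebra map; it is onto because
it hits `X = φ(leaf)`, and `X^n` has constant term `1` exactly for the empty forest. -/

theorem forestLeafCount_add (F G : Multiset BTree) :
    forestLeafCount (F + G) = forestLeafCount F + forestLeafCount G := by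
  simp [forestLeafCount]

theorem forestLeafCount_singleton (T : BTree) : forestLeafCount {T} = T.leafCount := by
  simp [forestLeafCount]

namespace BTree

theorem leafCount_pos (T : BTree) : 0 < T.leafCount := by
  induction T with
  | leaf => exact Nat.one_pos
  | node l r ihl _ => exact Nat.add_pos_left ihl _

theorem length_leafPos (T : BTree) : (leafPos T).length = T.leafCount := by
  induction T with
  | leaf => rfl
  | node l r ihl ihr => simp [leafPos, leafCount, ihl, ihr]

theorem nodup_leafPos (T : BTree) : (leafPos T).Nodup := by
  induction T with
  | leaf => simp [leafPos]
  | node l r ihl ihr =>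
    refine (ihl.map List.cons_injective).append (ihr.map List.cons_injective) ?_
    simp [List.disjoint_left]

theorem countP_mem_leafPos {T : BTree} {A : Finset (List Bool)}
    (hA : A ⊆ (leafPos T).toFinset) : (leafPos T).countP (fun s => s ∈ A) = A.card := by
  rw [List.countP_eq_length_filter, ← List.toFinset_card_of_nodup ((nodup_leafPos T).filter _),
    List.toFinset_filter]
  congr
  ext s
  simpa using fun hs => hA hs

theorem countP_notMem_leafPos {T : BTree} {A : Finset (List Bool)}
    (hA : A ⊆ (leafPos T).toFinset) :
    (leafPos T).countP (fun s => !decide (s ∈ A)) = T.leafCount - A.card := by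
  have hsplit := List.length_eq_countP_add_countP (fun s => decide (s ∈ A)) (l := leafPos T)
  simp only [length_leafPos, countP_mem_leafPos hA, Bool.not_eq_true, decide_eq_false_iff_not,
    decide_not] at hsplit
  omega

theorem countP_leafPos_node (f : List Bool → Bool) (l r : BTree) (q : List Bool) :
    (leafPos (node l r)).countP (fun s => f (q ++ s)) =
      (leafPos l).countP (fun s => f (q ++ [false] ++ s)) +
        (leafPos r).countP (fun s => f (q ++ [true] ++ s)) := by
  simp [leafPos, List.countP_map, Function.comp_def]

theorem forestLeafCount_maxSub (p : List Bool → Bool) (T : BTree) (q : List Bool) :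
    forestLeafCount ↑(maxSub p T q) = (leafPos T).countP (fun s => p (q ++ s)) := by
  induction T generalizing q with
  | leaf => by_cases h : p q <;> simp [maxSub, leafPos, forestLeafCount, leafCount, h]
  | node l r ihl ihr =>
    rw [maxSub]
    split_ifs with h
    · rw [List.countP_eq_length.2 (by simpa using h), length_leafPos]
      simp [forestLeafCount]
    · rw [countP_leafPos_node p, ← ihl, ← ihr, ← Multiset.coe_add, forestLeafCount_add]

theorem forestLeafCount_quotA (p : List Bool → Bool) (T : BTree) (q : List Bool) :
    forestLeafCount (optForest (quotA p T q)) = (leafPos T).countP (fun s => !p (q ++ s)) := by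
  induction T generalizing q with
  | leaf => by_cases h : p q <;> simp [quotA, leafPos, optForest, forestLeafCount, leafCount, h]
  | node l r ihl ihr =>
    rw [countP_leafPos_node (fun s => !p s), ← ihl, ← ihr, quotA]
    rcases quotA p l (q ++ [false]) with _ | l' <;> rcases quotA p r (q ++ [true]) with _ | r' <;>
      simp [optForest, forestLeafCount, leafCount]

end BTree

theorem forestLeafCount_eq_zero {F : Multiset BTree} : forestLeafCount F = 0 ↔ F = 0 := by
  simp [forestLeafCount, Multiset.sum_eq_zero_iff, Multiset.eq_zero_iff_forall_notMem,
    (BTree.leafCount_pos _).ne']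

open Polynomial

theorem φ_single (F : Multiset BTree) (c : ℚ) :
    φ (AddMonoidAlgebra.single F c) = c • X ^ forestLeafCount F := by
  simp [φ]

theorem ΔH_single (F : Multiset BTree) (c : ℚ) :
    ΔH (AddMonoidAlgebra.single F c) = c • forestDelta F := by
  simp [ΔH]

theorem εH_single (F : Multiset BTree) (c : ℚ) :
    εH (AddMonoidAlgebra.single F c) = if F = 0 then c else 0 := by
  by_cases hF : F = 0 <;> simp [εH, hF, eq_comm]

theorem φ_fδ (F : Multiset BTree) : φ (fδ F) = X ^ forestLeafCount F := by
  rw [fδ, φ_single, one_smul]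

def leafCountAlgHom : V →ₐ[ℚ] ℚ[X] :=
  AddMonoidAlgebra.lift ℚ ℚ[X] (Multiset BTree)
    { toFun := fun F => X ^ forestLeafCount F.toAdd
      map_one' := by simp [forestLeafCount]
      map_mul' := fun F G => by simp only [toAdd_mul, forestLeafCount_add, pow_add] }

theorem φ_eq_leafCountAlgHom : φ = leafCountAlgHom.toLinearMap := by
  refine AddMonoidAlgebra.lhom_ext' fun F => LinearMap.ext fun c => ?_
  simp [φ_single, leafCountAlgHom]

theorem map_φ_φ_apply (x : V ⊗[ℚ] V) :
    TensorProduct.map φ φ x = Algebra.TensorProduct.map leafCountAlgHom leafCountAlgHom x := by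
  rw [φ_eq_leafCountAlgHom]
  rfl

open BTree in
theorem map_φ_φ_treeDelta (T : BTree) :
    TensorProduct.map φ φ (treeDelta T) = (X ⊗ₜ[ℚ] 1 + 1 ⊗ₜ[ℚ] X) ^ T.leafCount := by
  have hcard : (leafPos T).toFinset.card = T.leafCount := by
    rw [List.toFinset_card_of_nodup (nodup_leafPos T), length_leafPos]
  rw [← hcard, ← Finset.sum_pow_mul_eq_add_pow, treeDelta, map_sum, hcard]
  refine Finset.sum_congr rfl fun A hA => ?_
  have hA : A ⊆ (leafPos T).toFinset := Finset.mem_powerset.1 hA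
  simp only [TensorProduct.map_tmul, φ_fδ, forestLeafCount_maxSub, forestLeafCount_quotA,
    List.nil_append, countP_mem_leafPos hA, countP_notMem_leafPos hA,
    Algebra.TensorProduct.tmul_pow, one_pow, Algebra.TensorProduct.tmul_mul_tmul, mul_one, one_mul]

theorem map_φ_φ_forestDelta (F : Multiset BTree) :
    TensorProduct.map φ φ (forestDelta F) = (X ⊗ₜ[ℚ] 1 + 1 ⊗ₜ[ℚ] X) ^ forestLeafCount F := by
  induction F using Multiset.induction with
  | empty =>
    rw [forestDelta, Multiset.map_zero, Multiset.prod_zero, forestLeafCount, Multiset.map_zero,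
      Multiset.sum_zero, pow_zero, map_φ_φ_apply, map_one]
  | cons T F ih =>
    rw [forestDelta, Multiset.map_cons, Multiset.prod_cons, ← forestDelta,
      ← Multiset.singleton_add, forestLeafCount_add, forestLeafCount_singleton, pow_add, ← ih,
      ← map_φ_φ_treeDelta, map_φ_φ_apply, map_φ_φ_apply, map_φ_φ_apply, map_mul]

theorem Δpoly_X_pow (n : ℕ) : Δpoly (X ^ n) = (X ⊗ₜ[ℚ] 1 + 1 ⊗ₜ[ℚ] X) ^ n := by
  rw [map_pow, Δpoly, aeval_X]

theorem map_φ_φ_comp_ΔH : TensorProduct.map φ φ ∘ₗ ΔH = Δpoly.toLinearMap ∘ₗ φ := by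
  refine AddMonoidAlgebra.lhom_ext' fun F => LinearMap.ext fun c => ?_
  simp [ΔH_single, φ_single, map_φ_φ_forestDelta, Δpoly_X_pow]

theorem lcoeff_zero_comp_φ : lcoeff ℚ 0 ∘ₗ φ = εH := by
  refine AddMonoidAlgebra.lhom_ext' fun F => LinearMap.ext fun c => ?_
  simp [φ_single, εH_single, coeff_X_pow, forestLeafCount_eq_zero, eq_comm]

/-- The map sending every binary forest with `n` leaves to `X^n` is a
surjective morphism of Hopf algebras `H → ℚ[X]`: it is a surjective algebra
map compatible with the coproducts (and counits); in particular
`(φ ⊗ φ)(Δ_H F) = Δ_{ℚ[X]}(X^n)` for every forest `F` with `n` leaves. -/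
theorem leafCount_hopf_morphism :
    Function.Surjective φ ∧
    φ 1 = 1 ∧
    (∀ x y : V, φ (x * y) = φ x * φ y) ∧
    (∀ x : V, TensorProduct.map φ φ (ΔH x) = Δpoly (φ x)) ∧
    (∀ x : V, Polynomial.eval 0 (φ x) = εH x) ∧
    (∀ F : Multiset BTree, φ (fδ F) = Polynomial.X ^ forestLeafCount F) := by
  have hX : leafCountAlgHom (fδ {BTree.leaf}) = X := by
    rw [← AlgHom.toLinearMap_apply, ← φ_eq_leafCountAlgHom, φ_fδ, forestLeafCount_singleton]
    exact pow_one X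
  refine ⟨fun p => ⟨aeval (fδ {BTree.leaf}) p, ?_⟩, ?_, fun x y => ?_,
    LinearMap.congr_fun map_φ_φ_comp_ΔH, fun x => ?_, φ_fδ⟩
  · rw [φ_eq_leafCountAlgHom, AlgHom.toLinearMap_apply, ← aeval_algHom_apply, hX,
      aeval_X_left_apply]
  · rw [φ_eq_leafCountAlgHom, AlgHom.toLinearMap_apply, map_one]
  · simp only [φ_eq_leafCountAlgHom, AlgHom.toLinearMap_apply, map_mul]
  · rw [← coeff_zero_eq_eval_zero, ← lcoeff_apply, ← lcoeff_zero_comp_φ]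
    rfl
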